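/- A point x₀ ∈ ℝⁿ is generic with respect to a locally finite arrangement A (in the sense of conditions (i) and (ii)) if and only if any two distinct flats of A have different distances from x₀. -/

import Mathlib

open Metric Set MeasureTheory

noncomputable section

/-- A locally finite arrangement of affine hyperplanes in ℝⁿ, given by affine
equations `⟪a i, x⟫ = b i` with `a i ≠ 0`, indexed injectively by `ι`. -/
structure Arrangement (n : ℕ) (ι : Type) where
  a : ι → EuclideanSpace ℝ (Fin n)
  b : ι → ℝ
  ha : ∀ i, a i ≠ 0
  inj : Function.Injective fun i => {x : EuclideanSpace ℝ (Fin n) | (inner ℝ (a i) x : ℝ) = b i}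
  locFin : ∀ x : EuclideanSpace ℝ (Fin n), ∃ ε > 0,
    {i : ι | ∃ y ∈ Metric.ball x ε, (inner ℝ (a i) y : ℝ) = b i}.Finite

namespace Arrangement

variable {n : ℕ} {ι : Type} (A : Arrangement n ι)

/-- The defining affine functional of the `i`-th hyperplane. -/
def val (i : ι) (x : EuclideanSpace ℝ (Fin n)) : ℝ := (inner ℝ (A.a i) x : ℝ) - A.b i

/-- The `i`-th hyperplane. -/
def hyperplane (i : ι) : Set (EuclideanSpace ℝ (Fin n)) := {x | A.val i x = 0}

/-- The sign vector of a point. -/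
def signAt (x : EuclideanSpace ℝ (Fin n)) : ι → SignType := fun i => SignType.sign (A.val i x)

/-- The (relatively open) stratum with sign vector `σ`. -/
def openCell (σ : ι → SignType) : Set (EuclideanSpace ℝ (Fin n)) :=
  {x | ∀ i, SignType.sign (A.val i x) = σ i}

/-- The (closed) faces of the arrangement: closures of the strata. -/
def IsFace (F : Set (EuclideanSpace ℝ (Fin n))) : Prop :=
  ∃ x : EuclideanSpace ℝ (Fin n), F = closure (A.openCell (A.signAt x))

/-- Chambers: closed faces of codimension 0. -/
def IsChamber (C : Set (EuclideanSpace ℝ (Fin n))) : Prop :=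
  ∃ x : EuclideanSpace ℝ (Fin n), (∀ i, A.val i x ≠ 0) ∧
    C = closure (A.openCell (A.signAt x))

/-- The support of a subset: the hyperplanes containing it. -/
def supp (U : Set (EuclideanSpace ℝ (Fin n))) : Set ι := {i | U ⊆ A.hyperplane i}

/-- The set of hyperplanes separating two chambers. -/
def sep (C C' : Set (EuclideanSpace ℝ (Fin n))) : Set ι :=
  {i | ∀ x ∈ interior C, ∀ y ∈ interior C', A.val i x * A.val i y < 0}

/-- `F` is a face of the chamber (or face) `C`. -/
def IsFaceOf (F C : Set (EuclideanSpace ℝ (Fin n))) : Prop := A.IsFace F ∧ F ⊆ C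

/-- `A.IsCF C F D` means `D = C.F`: `D` is the unique chamber containing `F` and not
separated from `C` by any hyperplane of `supp F`. -/
def IsCF (C F D : Set (EuclideanSpace ℝ (Fin n))) : Prop :=
  A.IsChamber D ∧ F ⊆ D ∧ A.sep C D ∩ A.supp F = ∅

/-- `A.IsOpp D F E` means `E = D^F`: `E` is the chamber opposite to `D` with respect to
its face `F`, i.e. the hyperplanes separating `D` and `E` are exactly those containing `F`. -/
def IsOpp (D F E : Set (EuclideanSpace ℝ (Fin n))) : Prop :=
  A.IsChamber E ∧ F ⊆ E ∧ A.sep D E = A.supp F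

/-- Flats: nonempty intersections of subfamilies of hyperplanes (including ℝⁿ itself). -/
def IsFlat (X : Set (EuclideanSpace ℝ (Fin n))) : Prop :=
  X.Nonempty ∧ ∃ s : Set ι, X = ⋂ i ∈ s, A.hyperplane i

/-- A cell `⟨C, F⟩` of the Salvetti complex: a chamber `C` together with a face `F` of `C`. -/
structure Cell {n : ℕ} {ι : Type} (𝒜 : Arrangement n ι) where
  C : Set (EuclideanSpace ℝ (Fin n))
  F : Set (EuclideanSpace ℝ (Fin n))
  isChamber : 𝒜.IsChamber C
  isFace : 𝒜.IsFace F
  faceLe : F ⊆ C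

/-- The Salvetti order: `⟨C,F⟩ ≤ ⟨D,G⟩` iff `F ⪯ G` (i.e. `F ⊇ G`) and `D.F = C`. -/
def cellLE (c d : A.Cell) : Prop := d.F ⊆ c.F ∧ A.IsCF d.C c.F c.C

/-- The subcomplex `S(C)`: cells `⟨D,F⟩` with `D = C.F`. -/
def inS (C : Set (EuclideanSpace ℝ (Fin n))) (c : A.Cell) : Prop := A.IsCF C c.F c.C

/-- A strict total order on the chambers. -/
def IsChamberOrder (lt : Set (EuclideanSpace ℝ (Fin n)) → Set (EuclideanSpace ℝ (Fin n)) → Prop) :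
    Prop :=
  (∀ C C', A.IsChamber C → A.IsChamber C' → C ≠ C' → lt C C' ∨ lt C' C) ∧
  (∀ C, ¬ lt C C) ∧
  (∀ C C' C'', lt C C' → lt C' C'' → lt C C'')

/-- The upper ideal `J(C)` of the poset of flats determined by a total order on chambers. -/
def J (lt : Set (EuclideanSpace ℝ (Fin n)) → Set (EuclideanSpace ℝ (Fin n)) → Prop)
    (C : Set (EuclideanSpace ℝ (Fin n))) : Set (Set (EuclideanSpace ℝ (Fin n))) :=
  {X | A.IsFlat X ∧ ∀ C', A.IsChamber C' → lt C' C → (A.supp X ∩ A.sep C C').Nonempty}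

/-- A valid order: for each chamber `C`, the ideal `J(C)` is the principal upper ideal
(in the poset of flats ordered by reverse inclusion) generated by `X_C = |F_C|` for some
face `F_C` of `C`. -/
def IsValidOrder
    (lt : Set (EuclideanSpace ℝ (Fin n)) → Set (EuclideanSpace ℝ (Fin n)) → Prop) : Prop :=
  A.IsChamberOrder lt ∧
  ∀ C, A.IsChamber C → ∃ F_C, A.IsFaceOf F_C C ∧
    A.J lt C = {X | A.IsFlat X ∧ X ⊆ (affineSpan ℝ F_C : Set (EuclideanSpace ℝ (Fin n)))}

/-- Membership in `N(C)`: cells of `S(C)` not lying in any earlier `S(C')`. -/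
def inN (lt : Set (EuclideanSpace ℝ (Fin n)) → Set (EuclideanSpace ℝ (Fin n)) → Prop)
    (C : Set (EuclideanSpace ℝ (Fin n))) (c : A.Cell) : Prop :=
  A.inS C c ∧ ∀ C', A.IsChamber C' → lt C' C → ¬ A.inS C' c

/-- A point `x₀` is generic with respect to `A`: (i) chambers at equal distance from `x₀`
have the same metric projection of `x₀`, lying in their intersection; (ii) distances to
strictly comparable flats are strictly comparable. -/
def IsGeneric (x₀ : EuclideanSpace ℝ (Fin n)) : Prop :=
  (∀ C C', A.IsChamber C → A.IsChamber C' → infDist x₀ C = infDist x₀ C' →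
    ∀ p ∈ C, ∀ p' ∈ C', (∀ q ∈ C, dist x₀ p ≤ dist x₀ q) →
      (∀ q ∈ C', dist x₀ p' ≤ dist x₀ q) → p = p' ∧ p ∈ C ∩ C') ∧
  (∀ L L', A.IsFlat L → A.IsFlat L' → L' ⊂ L → infDist x₀ L < infDist x₀ L')

end Arrangement

/-! For a chamber `C` with nearest point `p` to `x₀`, first-order optimality puts `x₀ - p` in the
span of the normals of the hyperplanes through `p`; so `p` is also the nearest point of the
smallest flat `X_p` through `p`, at the same distance. Conversely, if `p` is the nearest point of a
flat, `x₀ - p` is such a combination of normals, and since the normal cones at `p` of the chambers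
through `p` cover that span, `p` is the nearest point of some chamber.

If distinct flats have distinct distances, two equidistant chambers give `X_p = X_p'`, and
Pythagoras in this flat forces `p = p'`. Conversely, for a generic point two incomparable
equidistant flats `L`, `L'` give two equidistant chambers, hence a common nearest point
`p ∈ L ∩ L'`; the flat `L ∩ L'` is then strictly smaller than `L` but not farther away. -/

open Filter Topology

lemma sign_eq_sign_iff_mul_pos {a b : ℝ} (hb : b ≠ 0) :
    SignType.sign a = SignType.sign b ↔ 0 < a * b := by
  rcases hb.lt_or_gt with hb | hb <;> rcases lt_trichotomy a 0 with ha | ha | ha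
  all_goals simp [sign_neg, sign_pos, ha, hb, mul_pos_of_neg_of_neg] <;> linarith

lemma mul_nonneg_of_mul_pos_of_mul_nonneg {a b c : ℝ} (hab : 0 < b * a) (hbc : 0 ≤ b * c) :
    0 ≤ a * c := by
  have hb : b ≠ 0 := by rintro rfl; simp at hab
  nlinarith [mul_nonneg hab.le hbc, sq_pos_of_ne_zero hb]

lemma IsPreconnected.mul_pos_of_ne_zero {X : Type*} [TopologicalSpace X] {s : Set X}
    (hs : IsPreconnected s) {f : X → ℝ} (hf : ContinuousOn f s) (h0 : ∀ x ∈ s, f x ≠ 0)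
    {a b : X} (ha : a ∈ s) (hb : b ∈ s) : 0 < f a * f b := by
  by_contra! hab
  obtain ⟨x, hx, hfx⟩ : (0 : ℝ) ∈ f '' s := by
    rcases mul_nonpos_iff.mp hab with ⟨h1, h2⟩ | ⟨h1, h2⟩
    · exact hs.intermediate_value hb ha hf ⟨h2, h1⟩
    · exact hs.intermediate_value ha hb hf ⟨h1, h2⟩
  exact h0 x hx hfx

section InnerProductSpace

variable {F : Type*} [NormedAddCommGroup F] [InnerProductSpace ℝ F]

local notation "⟪" x ", " y "⟫" => @inner ℝ _ _ x y

omit [InnerProductSpace ℝ F] in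
lemma infDist_eq_dist_of_forall_dist_le {K : Set F} {x p : F} (hp : p ∈ K)
    (hmin : ∀ q ∈ K, dist x p ≤ dist x q) : infDist x K = dist x p :=
  le_antisymm (infDist_le_dist_of_mem hp) ((le_infDist ⟨p, hp⟩).2 hmin)

lemma dist_sq_eq_of_inner_eq_zero {x p q : F} (h : ⟪x - p, q - p⟫ = 0) :
    dist x q ^ 2 = dist x p ^ 2 + dist p q ^ 2 := by
  rw [dist_eq_norm, dist_eq_norm, dist_comm, dist_eq_norm, ← sub_sub_sub_cancel_right x q p]
  simpa only [sq] using norm_sub_sq_eq_norm_sq_add_norm_sq_real h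

lemma dist_le_dist_of_inner_nonpos {x p q : F} (h : ⟪x - p, q - p⟫ ≤ 0) :
    dist x p ≤ dist x q := by
  have : ‖x - q‖ ^ 2 = ‖x - p‖ ^ 2 - 2 * ⟪x - p, q - p⟫ + ‖q - p‖ ^ 2 := by
    rw [← norm_sub_sq_real, sub_sub_sub_cancel_right]
  rw [dist_eq_norm, dist_eq_norm]
  exact (sq_le_sq₀ (norm_nonneg _) (norm_nonneg _)).1 (by nlinarith)

lemma inner_nonpos_of_forall_dist_le {K : Set F} (hK : Convex ℝ K) {x p q : F} (hp : p ∈ K)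
    (hmin : ∀ q ∈ K, dist x p ≤ dist x q) (hq : q ∈ K) : ⟪x - p, q - p⟫ ≤ 0 := by
  refine (norm_eq_iInf_iff_real_inner_le_zero hK hp).1 (le_antisymm ?_ ?_) q hq
  · have : Nonempty K := ⟨⟨p, hp⟩⟩
    exact le_ciInf fun w => by simpa only [dist_eq_norm] using hmin w w.2
  · exact ciInf_le (f := fun w : K => ‖x - w‖)
      ⟨0, forall_mem_range.2 fun _ => norm_nonneg _⟩ ⟨p, hp⟩

lemma inner_eq_zero_of_forall_dist_le {K : Set F} (hK : Convex ℝ K) {x p w : F} (hp : p ∈ K)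
    (hmin : ∀ q ∈ K, dist x p ≤ dist x q) (hw : ∀ᶠ t in 𝓝 (0 : ℝ), p + t • w ∈ K) :
    ⟪x - p, w⟫ = 0 := by
  have hw' : ∀ᶠ t in 𝓝[>] (0 : ℝ), p + t • w ∈ K ∧ p + (-t) • w ∈ K :=
    nhdsWithin_le_nhds (hw.and ((continuous_neg.tendsto' (0 : ℝ) 0 neg_zero).eventually hw))
  obtain ⟨t, ⟨hpos, hneg⟩, ht⟩ := (hw'.and self_mem_nhdsWithin).exists
  have ipos := inner_nonpos_of_forall_dist_le hK hp hmin hpos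
  have ineg := inner_nonpos_of_forall_dist_le hK hp hmin hneg
  simp only [add_sub_cancel_left, inner_smul_right] at ipos ineg
  nlinarith

lemma Submodule.mem_orthogonal_span_iff {S : Set F} {v : F} :
    v ∈ (Submodule.span ℝ S)ᗮ ↔ ∀ u ∈ S, ⟪u, v⟫ = 0 := by
  rw [← Submodule.span_singleton_le_iff_mem, ← Submodule.isOrtho_iff_le, Submodule.isOrtho_comm,
    Submodule.isOrtho_span]
  simp

lemma dense_setOf_inner_ne_zero {x : F} (hx : x ≠ 0) : Dense {v : F | ⟪x, v⟫ ≠ 0} := by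
  have hK : ((ℝ ∙ x)ᗮ : Set F)ᶜ = {v | ⟪x, v⟫ ≠ 0} := by
    ext v
    simp [Submodule.mem_orthogonal_singleton_iff_inner_right]
  rw [← hK, ← interior_eq_empty_iff_dense_compl, ← not_nonempty_iff_eq_empty]
  intro hint
  have := (Submodule.eq_top_of_nonempty_interior' _ hint).ge (Submodule.mem_top (x := x))
  rw [Submodule.mem_orthogonal_singleton_iff_inner_right, inner_self_eq_zero] at this
  exact hx this

lemma exists_forall_inner_ne_zero_and_mul_inner_pos {s : Set F} (hs : s.Finite) (h0 : (0 : F) ∉ s)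
    (v₀ : F) : ∃ v : F, ∀ x ∈ s, ⟪x, v⟫ ≠ 0 ∧ (⟪x, v₀⟫ ≠ 0 → 0 < ⟪x, v⟫ * ⟪x, v₀⟫) := by
  have hdense : Dense (⋂ x ∈ s, {v : F | ⟪x, v⟫ ≠ 0}) := by
    rw [← sInter_image]
    refine (hs.image _).dense_sInter ?_ ?_ <;> rintro _ ⟨x, hx, rfl⟩
    · exact isOpen_ne_fun (continuous_const.inner continuous_id) continuous_const
    · exact dense_setOf_inner_ne_zero (ne_of_mem_of_not_mem hx h0)
  have hopen : IsOpen (⋂ x ∈ s, {v : F | ⟪x, v₀⟫ ≠ 0 → 0 < ⟪x, v⟫ * ⟪x, v₀⟫}) := by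
    refine hs.isOpen_biInter fun x _ => ?_
    by_cases hx : ⟪x, v₀⟫ = 0
    · simp [hx]
    · simpa [hx] using isOpen_lt continuous_const
        ((continuous_const.inner continuous_id).mul continuous_const)
  obtain ⟨v, hv₁, hv₂⟩ := hdense.inter_open_nonempty _ hopen
    ⟨v₀, mem_iInter₂.2 fun x _ hx => mul_self_pos.2 hx⟩
  exact ⟨v, fun x hx => ⟨mem_iInter₂.1 hv₂ x hx, mem_iInter₂.1 hv₁ x hx⟩⟩

lemma LinearIndependent.exists_forall_inner_eq {κ : Type*} [Finite κ] {f : κ → F}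
    (hf : LinearIndependent ℝ f) (c : κ → ℝ) : ∃ v : F, ∀ i, ⟪f i, v⟫ = c i := by
  let V := Submodule.span ℝ (range f)
  have : FiniteDimensional ℝ V := FiniteDimensional.span_of_finite ℝ (finite_range f)
  have : CompleteSpace V := FiniteDimensional.complete ℝ V
  let φ : V →ₗ[ℝ] ℝ := (Module.Basis.span hf).constr ℝ c
  refine ⟨(InnerProductSpace.toDual ℝ V).symm (LinearMap.toContinuousLinearMap φ), fun i => ?_⟩
  have hfi : f i = (Module.Basis.span hf i : F) := by rw [Module.Basis.span_apply]
  rw [real_inner_comm, hfi, ← Submodule.coe_inner, InnerProductSpace.toDual_symm_apply]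
  exact (Module.Basis.span hf).constr_basis ℝ c i

/-- The cones `{y | ∀ x ∈ s, 0 ≤ ⟪x, v⟫ * ⟪x, y⟫}` with `v` off all the hyperplanes `xᗮ` are the
chambers of the central arrangement `{xᗮ | x ∈ s}`: every `w ∈ span s` is nonnegative on one of
them. Writing `w` in a linearly independent subfamily of `s`, a `v` whose inner products with it
are the coefficients of `w` works, after a perturbation moving it off the hyperplanes. -/
lemma exists_inner_ne_zero_and_inner_nonneg_of_mem_span {s : Set F} (hs : s.Finite)
    (h0 : (0 : F) ∉ s) {w : F} (hw : w ∈ Submodule.span ℝ s) :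
    ∃ v : F, (∀ x ∈ s, ⟪x, v⟫ ≠ 0) ∧ ∀ y, (∀ x ∈ s, 0 ≤ ⟪x, v⟫ * ⟪x, y⟫) → 0 ≤ ⟪w, y⟫ := by
  obtain ⟨b, hbs, hspan, hli⟩ := exists_linearIndependent ℝ s
  have : Fintype b := (hs.subset hbs).fintype
  obtain ⟨c, hc⟩ : ∃ c : b → ℝ, ∑ x, c x • (x : F) = w := by
    rw [← hspan, ← Subtype.range_coe (s := b)] at hw
    exact (Submodule.mem_span_range_iff_exists_fun ℝ).1 hw
  obtain ⟨v₀, hv₀⟩ := hli.exists_forall_inner_eq c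
  obtain ⟨v, hv⟩ := exists_forall_inner_ne_zero_and_mul_inner_pos hs h0 v₀
  refine ⟨v, fun x hx => (hv x hx).1, fun y hy => ?_⟩
  rw [← hc, sum_inner]
  refine Finset.sum_nonneg fun x _ => ?_
  rw [real_inner_smul_left]
  by_cases hcx : c x = 0
  · simp [hcx]
  · have hcv := (hv x (hbs x.2)).2 (by rw [hv₀]; exact hcx)
    rw [hv₀] at hcv
    exact mul_nonneg_of_mul_pos_of_mul_nonneg hcv (hy x (hbs x.2))

end InnerProductSpace

namespace Arrangement

variable {n : ℕ} {ι : Type} (A : Arrangement n ι)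

local notation "E" => EuclideanSpace ℝ (Fin n)
local notation "⟪" x ", " y "⟫" => @inner ℝ _ _ x y

lemma continuous_val (i : ι) : Continuous (A.val i) :=
  (continuous_const.inner continuous_id).sub continuous_const

lemma val_add_smul (i : ι) (x v : E) (t : ℝ) :
    A.val i (x + t • v) = A.val i x + t * ⟪A.a i, v⟫ := by
  simp only [val, inner_add_right, real_inner_smul_right]
  ring

lemma val_sub_val (i : ι) (x y : E) : A.val i x - A.val i y = ⟪A.a i, x - y⟫ := by
  simp only [val, inner_sub_right]
  ring

lemma val_smul_add_smul (i : ι) (x y : E) {s t : ℝ} (hst : s + t = 1) :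
    A.val i (s • x + t • y) = s * A.val i x + t * A.val i y := by
  simp only [val, inner_add_right, real_inner_smul_right]
  linear_combination A.b i * hst

lemma mem_supp_singleton {i : ι} {p : E} : i ∈ A.supp {p} ↔ A.val i p = 0 := by
  simp [supp, hyperplane]

lemma finite_supp_singleton (p : E) : (A.supp {p}).Finite := by
  obtain ⟨ε, hε, hfin⟩ := A.locFin p
  exact hfin.subset fun i hi => ⟨p, mem_ball_self hε, sub_eq_zero.1 (A.mem_supp_singleton.1 hi)⟩

lemma eventually_mul_val_pos (p : E) :
    ∀ᶠ y in 𝓝 p, ∀ i, A.val i p ≠ 0 → 0 < A.val i p * A.val i y := by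
  obtain ⟨ε, hε, hfin⟩ := A.locFin p
  have hnear : ∀ᶠ y in 𝓝 p, ∀ i ∈ {i : ι | ∃ y ∈ ball p ε, ⟪A.a i, y⟫ = A.b i},
      A.val i p ≠ 0 → 0 < A.val i p * A.val i y := by
    refine (eventually_all_finite hfin).2 fun i _ => ?_
    by_cases h : A.val i p = 0
    · simp [h]
    · filter_upwards [((continuous_const.mul (A.continuous_val i)).tendsto p).eventually_const_lt
        (mul_self_pos.2 h)] with y hy _ using hy
  filter_upwards [hnear, ball_mem_nhds p hε] with y hy hyb i hi
  by_cases hiT : ∃ z ∈ ball p ε, ⟪A.a i, z⟫ = A.b i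
  · exact hy i hiT hi
  · exact (convex_ball p ε).isPreconnected.mul_pos_of_ne_zero (A.continuous_val i).continuousOn
      (fun z hz h0 => hiT ⟨z, hz, sub_eq_zero.1 h0⟩) (mem_ball_self hε) hyb

lemma closure_openCell_signAt {x : E} (hx : ∀ i, A.val i x ≠ 0) :
    closure (A.openCell (A.signAt x)) = {y | ∀ i, 0 ≤ A.val i y * A.val i x} := by
  have hcell : A.openCell (A.signAt x) = {y | ∀ i, 0 < A.val i y * A.val i x} := by
    ext y
    exact forall_congr' fun i => sign_eq_sign_iff_mul_pos (hx i)
  refine Subset.antisymm (closure_minimal (fun y hy i => (hcell ▸ hy) i |>.le) ?_) fun y hy => ?_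
  · rw [ofPred_forall]
    exact isClosed_iInter fun i => isClosed_le continuous_const
      ((A.continuous_val i).mul continuous_const)
  · have hlim : Tendsto (fun t : ℝ => y + t • (x - y)) (𝓝[>] 0) (𝓝 y) :=
      ((continuous_const.add (continuous_id.smul continuous_const)).tendsto' 0 y
        (by simp)).mono_left nhdsWithin_le_nhds
    refine mem_closure_of_tendsto hlim ?_
    filter_upwards [Ioo_mem_nhdsGT one_pos] with t ht
    rw [hcell]
    intro i
    rw [val_add_smul, ← val_sub_val]
    nlinarith [mul_pos ht.1 (mul_self_pos.2 (hx i)), mul_nonneg (sub_nonneg.2 ht.2.le) (hy i)]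

variable {A} in
lemma IsChamber.convex {C : Set E} (hC : A.IsChamber C) : Convex ℝ C := by
  obtain ⟨x, hx, rfl⟩ := hC
  rw [A.closure_openCell_signAt hx]
  intro y hy z hz s t hs ht hst i
  rw [val_smul_add_smul _ _ _ _ hst]
  nlinarith [mul_nonneg hs (hy i), mul_nonneg ht (hz i)]

variable {A} in
lemma IsChamber.eventually_add_smul_mem {C : Set E} (hC : A.IsChamber C) {p w : E} (hp : p ∈ C)
    (hw : ∀ i ∈ A.supp {p}, ⟪A.a i, w⟫ = 0) : ∀ᶠ t in 𝓝 (0 : ℝ), p + t • w ∈ C := by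
  obtain ⟨x, hx, rfl⟩ := hC
  rw [A.closure_openCell_signAt hx] at hp ⊢
  have hlim : Tendsto (fun t : ℝ => p + t • w) (𝓝 0) (𝓝 p) :=
    (continuous_const.add (continuous_id.smul continuous_const)).tendsto' 0 p (by simp)
  filter_upwards [hlim.eventually (A.eventually_mul_val_pos p)] with t ht i
  by_cases hi : A.val i p = 0
  · rw [val_add_smul, hi, hw i (A.mem_supp_singleton.2 hi)]
    simp
  · exact mul_nonneg_of_mul_pos_of_mul_nonneg (ht i hi) (hp i)

lemma exists_isChamber_inner_nonneg (p v : E) (hv : ∀ i ∈ A.supp {p}, ⟪A.a i, v⟫ ≠ 0) :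
    ∃ C, A.IsChamber C ∧ p ∈ C ∧ ∀ q ∈ C, ∀ i ∈ A.supp {p}, 0 ≤ ⟪A.a i, v⟫ * ⟪A.a i, q - p⟫ := by
  have hlim : Tendsto (fun t : ℝ => p + t • v) (𝓝[>] 0) (𝓝 p) :=
    ((continuous_const.add (continuous_id.smul continuous_const)).tendsto' 0 p
      (by simp)).mono_left nhdsWithin_le_nhds
  obtain ⟨t, ht, htpos⟩ :=
    ((hlim.eventually (A.eventually_mul_val_pos p)).and self_mem_nhdsWithin).exists
  have hval : ∀ i ∈ A.supp {p}, A.val i (p + t • v) = t * ⟪A.a i, v⟫ := fun i hi => by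
    rw [val_add_smul, A.mem_supp_singleton.1 hi, zero_add]
  have hx : ∀ i, A.val i (p + t • v) ≠ 0 := fun i => by
    by_cases hi : i ∈ A.supp {p}
    · rw [hval i hi]
      exact mul_ne_zero (ne_of_gt htpos) (hv i hi)
    · exact right_ne_zero_of_mul (ht i (mt A.mem_supp_singleton.2 hi)).ne'
  refine ⟨_, ⟨_, hx, rfl⟩, ?_, ?_⟩ <;> rw [A.closure_openCell_signAt hx]
  · intro i
    by_cases hi : A.val i p = 0
    · simp [hi]
    · exact (ht i hi).le
  · intro q hq i hi
    have hq' := hq i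
    have hqi : A.val i q = ⟪A.a i, q - p⟫ := by
      rw [← val_sub_val, A.mem_supp_singleton.1 hi, sub_zero]
    rwa [hval i hi, hqi, mul_left_comm, mul_nonneg_iff_of_pos_left htpos, mul_comm] at hq'

lemma convex_iInter_hyperplane (s : Set ι) : Convex ℝ (⋂ i ∈ s, A.hyperplane i) :=
  convex_iInter₂ fun i _ x hx y hy a b _ _ hab => by
    simp only [hyperplane, mem_ofPred_eq] at hx hy ⊢
    rw [val_smul_add_smul _ _ _ _ hab, hx, hy]
    ring

lemma isClosed_iInter_hyperplane (s : Set ι) : IsClosed (⋂ i ∈ s, A.hyperplane i) :=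
  isClosed_biInter fun i _ => isClosed_eq (A.continuous_val i) continuous_const

lemma mem_iInter_hyperplane_iff {s : Set ι} {p q : E} (hp : p ∈ ⋂ i ∈ s, A.hyperplane i) :
    q ∈ ⋂ i ∈ s, A.hyperplane i ↔ q - p ∈ (Submodule.span ℝ (A.a '' s))ᗮ := by
  simp only [mem_iInter₂, hyperplane, mem_ofPred_eq] at hp ⊢
  rw [Submodule.mem_orthogonal_span_iff, forall_mem_image]
  refine forall₂_congr fun i hi => ?_
  rw [← val_sub_val, hp i hi, sub_zero]

lemma dist_sq_eq_of_mem_iInter_hyperplane {s : Set ι} {x₀ p q : E}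
    (hp : p ∈ ⋂ i ∈ s, A.hyperplane i) (hu : x₀ - p ∈ Submodule.span ℝ (A.a '' s))
    (hq : q ∈ ⋂ i ∈ s, A.hyperplane i) : dist x₀ q ^ 2 = dist x₀ p ^ 2 + dist p q ^ 2 :=
  dist_sq_eq_of_inner_eq_zero
    (Submodule.inner_right_of_mem_orthogonal hu ((A.mem_iInter_hyperplane_iff hp).1 hq))

lemma sub_mem_span_of_forall_dist_le {s : Set ι} {x₀ p : E} (hp : p ∈ ⋂ i ∈ s, A.hyperplane i)
    (hmin : ∀ q ∈ ⋂ i ∈ s, A.hyperplane i, dist x₀ p ≤ dist x₀ q) :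
    x₀ - p ∈ Submodule.span ℝ (A.a '' s) := by
  rw [← (Submodule.span ℝ (A.a '' s)).orthogonal_orthogonal, Submodule.mem_orthogonal]
  intro w hw
  rw [real_inner_comm]
  refine inner_eq_zero_of_forall_dist_le (A.convex_iInter_hyperplane s) hp hmin
    (Eventually.of_forall fun t => ?_)
  rw [A.mem_iInter_hyperplane_iff hp, add_sub_cancel_left]
  exact Submodule.smul_mem _ t hw

variable {A} in
lemma IsChamber.sub_mem_span_of_forall_dist_le {C : Set E} (hC : A.IsChamber C) {x₀ p : E}
    (hp : p ∈ C) (hmin : ∀ q ∈ C, dist x₀ p ≤ dist x₀ q) :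
    x₀ - p ∈ Submodule.span ℝ (A.a '' A.supp {p}) := by
  rw [← (Submodule.span ℝ (A.a '' A.supp {p})).orthogonal_orthogonal, Submodule.mem_orthogonal]
  intro w hw
  rw [real_inner_comm]
  refine inner_eq_zero_of_forall_dist_le hC.convex hp hmin (hC.eventually_add_smul_mem hp ?_)
  exact fun i hi => Submodule.mem_orthogonal_span_iff.1 hw _ (mem_image_of_mem _ hi)

lemma exists_isChamber_forall_dist_le {x₀ p : E}
    (hu : x₀ - p ∈ Submodule.span ℝ (A.a '' A.supp {p})) :
    ∃ C, A.IsChamber C ∧ p ∈ C ∧ ∀ q ∈ C, dist x₀ p ≤ dist x₀ q := by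
  obtain ⟨v, hv, hcone⟩ := exists_inner_ne_zero_and_inner_nonneg_of_mem_span
    ((A.finite_supp_singleton p).image A.a) (by rintro ⟨i, -, hi⟩; exact A.ha i hi) (neg_mem hu)
  obtain ⟨C, hC, hpC, hCv⟩ :=
    A.exists_isChamber_inner_nonneg p v fun i hi => hv _ (mem_image_of_mem _ hi)
  refine ⟨C, hC, hpC, fun q hq => dist_le_dist_of_inner_nonpos ?_⟩
  have := hcone (q - p) (forall_mem_image.2 fun i hi => hCv q hq i hi)
  rw [inner_neg_left] at this
  linarith

def flatThrough (p : E) : Set E := ⋂ i ∈ A.supp {p}, A.hyperplane i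

lemma mem_flatThrough_self (p : E) : p ∈ A.flatThrough p :=
  mem_iInter₂.2 fun _ hi => A.mem_supp_singleton.1 hi

lemma isFlat_flatThrough (p : E) : A.IsFlat (A.flatThrough p) :=
  ⟨⟨p, A.mem_flatThrough_self p⟩, _, rfl⟩

variable {A} in
lemma IsFlat.inter {L L' : Set E} (hL : A.IsFlat L) (hL' : A.IsFlat L') (hne : (L ∩ L').Nonempty) :
    A.IsFlat (L ∩ L') := by
  obtain ⟨-, s, rfl⟩ := hL
  obtain ⟨-, s', rfl⟩ := hL'
  exact ⟨hne, s ∪ s', by rw [biInter_union]⟩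

variable {A} in
lemma IsChamber.dist_sq_eq_of_mem_flatThrough {C : Set E} (hC : A.IsChamber C) {x₀ p q : E}
    (hp : p ∈ C) (hmin : ∀ q ∈ C, dist x₀ p ≤ dist x₀ q) (hq : q ∈ A.flatThrough p) :
    dist x₀ q ^ 2 = dist x₀ p ^ 2 + dist p q ^ 2 :=
  A.dist_sq_eq_of_mem_iInter_hyperplane (A.mem_flatThrough_self p)
    (hC.sub_mem_span_of_forall_dist_le hp hmin) hq

variable {A} in
lemma IsChamber.infDist_flatThrough {C : Set E} (hC : A.IsChamber C) {x₀ p : E} (hp : p ∈ C)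
    (hmin : ∀ q ∈ C, dist x₀ p ≤ dist x₀ q) : infDist x₀ (A.flatThrough p) = dist x₀ p := by
  refine infDist_eq_dist_of_forall_dist_le (A.mem_flatThrough_self p) fun q hq => ?_
  rw [← sq_le_sq₀ dist_nonneg dist_nonneg, hC.dist_sq_eq_of_mem_flatThrough hp hmin hq]
  exact le_add_of_nonneg_right (sq_nonneg _)

variable {A} in
lemma IsFlat.exists_isChamber {L : Set E} (hL : A.IsFlat L) (x₀ : E) :
    ∃ C p, A.IsChamber C ∧ p ∈ C ∧ p ∈ L ∧ (∀ q ∈ C, dist x₀ p ≤ dist x₀ q) ∧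
      infDist x₀ L = dist x₀ p := by
  obtain ⟨hne, s, rfl⟩ := hL
  obtain ⟨p, hpL, hpd⟩ := (A.isClosed_iInter_hyperplane s).exists_infDist_eq_dist hne x₀
  have hu := A.sub_mem_span_of_forall_dist_le hpL fun q hq => hpd ▸ infDist_le_dist_of_mem hq
  have hs : s ⊆ A.supp {p} := fun i hi => A.mem_supp_singleton.2 (mem_iInter₂.1 hpL i hi)
  obtain ⟨C, hC, hpC, hmin⟩ :=
    A.exists_isChamber_forall_dist_le (Submodule.span_mono (image_mono hs) hu)
  exact ⟨C, p, hC, hpC, hpL, hmin, hpd⟩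

variable {A} in
lemma IsGeneric.infDist_ne {x₀ : E} (hG : A.IsGeneric x₀) {L L' : Set E} (hL : A.IsFlat L)
    (hL' : A.IsFlat L') (hne : L ≠ L') : infDist x₀ L ≠ infDist x₀ L' := by
  intro heq
  by_cases hLL' : L ⊆ L'
  · exact (hG.2 L' L hL' hL (hLL'.ssubset_of_ne hne)).ne' heq
  by_cases hL'L : L' ⊆ L
  · exact (hG.2 L L' hL hL' (hL'L.ssubset_of_ne hne.symm)).ne' heq.symm
  obtain ⟨C, p, hC, hpC, hpL, hmin, hpd⟩ := hL.exists_isChamber x₀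
  obtain ⟨C', p', hC', hp'C', hp'L', hmin', hp'd⟩ := hL'.exists_isChamber x₀
  have hCC' : infDist x₀ C = infDist x₀ C' := by
    rw [infDist_eq_dist_of_forall_dist_le hpC hmin, infDist_eq_dist_of_forall_dist_le hp'C' hmin',
      ← hpd, ← hp'd, heq]
  obtain ⟨rfl, -⟩ := hG.1 C C' hC hC' hCC' p hpC p' hp'C' hmin hmin'
  -- `L ∩ L'` is a flat through `p` strictly inside `L`, yet no farther from `x₀` than `L`.
  have hlt := hG.2 L (L ∩ L') hL (hL.inter hL' ⟨p, hpL, hp'L'⟩)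
    (inter_subset_left.ssubset_of_ne fun h => hLL' (h ▸ inter_subset_right))
  exact (infDist_le_dist_of_mem (show p ∈ L ∩ L' from ⟨hpL, hp'L'⟩)).not_gt (hpd ▸ hlt)

lemma isGeneric_of_infDist_ne {x₀ : E}
    (h : ∀ L L', A.IsFlat L → A.IsFlat L' → L ≠ L' → infDist x₀ L ≠ infDist x₀ L') :
    A.IsGeneric x₀ := by
  refine ⟨fun C C' hC hC' hCC' p hp p' hp' hmin hmin' => ?_, fun L L' hL hL' hLL' =>
    (infDist_le_infDist_of_subset hLL'.subset hL'.1).lt_of_ne (h L L' hL hL' hLL'.ne.symm)⟩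
  have hd : dist x₀ p = dist x₀ p' := by
    rw [← infDist_eq_dist_of_forall_dist_le hp hmin, ← infDist_eq_dist_of_forall_dist_le hp' hmin',
      hCC']
  have hflat : A.flatThrough p = A.flatThrough p' := by
    by_contra hne
    exact h _ _ (A.isFlat_flatThrough p) (A.isFlat_flatThrough p') hne
      (by rw [hC.infDist_flatThrough hp hmin, hC'.infDist_flatThrough hp' hmin', hd])
  have hpyth := hC.dist_sq_eq_of_mem_flatThrough hp hmin (hflat ▸ A.mem_flatThrough_self p')
  rw [hd, left_eq_add, sq_eq_zero_iff, dist_eq_zero] at hpyth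
  subst hpyth
  exact ⟨rfl, hp, hp'⟩

end Arrangement

/-- A point is generic iff any two distinct flats have different distances from it. -/
theorem stmt15 {n : ℕ} {ι : Type} (A : Arrangement n ι) (x₀ : EuclideanSpace ℝ (Fin n)) :
    A.IsGeneric x₀ ↔
      ∀ L L', A.IsFlat L → A.IsFlat L' → L ≠ L' → infDist x₀ L ≠ infDist x₀ L' :=
  ⟨fun hG _ _ hL hL' hne => hG.infDist_ne hL hL' hne, A.isGeneric_of_infDist_ne⟩
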